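/- Let f ∈ R° for a d-dimensional reduced Cohen-Macaulay local ring (R, 𝔪) of characteristic p > 0, and let t ≥ 0 be real. If for some e' > 0 and z ∈ H^d_𝔪(R) one has f^{⌊t(p^{e'}−1)⌋}·z^{p^{e'}} = 0, then f^{⌊t(p^{e'}p^b−1)⌋}·z^{p^{e'+b}} = 0 for every b > 0. Consequently, if for infinitely many e ≥ 0 we have f^{⌊t(p^e−1)⌋}·z^{p^e} ≠ 0, then this holds for all e ≥ 0. -/

import Mathlib

open Function IsLocalRing

noncomputable section

namespace RatPairs

/-- The set `R°` of elements of `R` not contained in any minimal prime. -/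
def Rcirc (R : Type*) [CommRing R] : Set R := {c | ∀ P ∈ minimalPrimes R, c ∉ P}

/-- The Frobenius power `I^{[q]}` of an ideal: the ideal generated by `q`-th powers
of elements of `I`. -/
def frobPow {R : Type*} [CommRing R] (I : Ideal R) (q : ℕ) : Ideal R :=
  Ideal.span ((fun x => x ^ q) '' (I : Set R))

/-- The `𝔞^t`-tight closure of an ideal `I`: all `z` such that for some `c ∈ R°`,
`c · 𝔞^{⌈t q⌉} · z^q ⊆ I^{[q]}` for all large `q = p^e`. -/
def tightClosure {R : Type*} [CommRing R] (p : ℕ) (a : Ideal R) (t : ℝ) (I : Ideal R) :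
    Set R :=
  {z | ∃ c ∈ Rcirc R, ∃ e₀ : ℕ, ∀ e ≥ e₀, ∀ y ∈ a ^ ⌈t * (p : ℝ) ^ e⌉₊,
    c * y * z ^ p ^ e ∈ frobPow I (p ^ e)}

/-- A system of parameters for a local ring: `dim R` elements generating an ideal
whose radical is the maximal ideal. -/
def IsSOP {R : Type*} [CommRing R] [IsLocalRing R] {n : ℕ} (x : Fin n → R) : Prop :=
  (n : WithBot (WithTop ℕ)) = ringKrullDim R ∧
    (Ideal.span (Set.range x)).radical = maximalIdeal R

/-- The pair `(R, 𝔞^t)` of a local ring is F-rational if every parameter ideal is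
`𝔞^t`-tightly closed. -/
def FRationalPairAt (R : Type*) [CommRing R] [IsLocalRing R] (p : ℕ) (a : Ideal R)
    (t : ℝ) : Prop :=
  ∀ (n : ℕ) (x : Fin n → R), IsSOP x →
    tightClosure p a t (Ideal.span (Set.range x)) = ↑(Ideal.span (Set.range x))

/-- F-rationality of a pair for a not necessarily local ring: F-rationality of the
localization at every maximal ideal. -/
def FRationalPair (R : Type*) [CommRing R] (p : ℕ) (a : Ideal R) (t : ℝ) : Prop :=
  ∀ (m : Ideal R) (hm : m.IsMaximal),
    letI := hm.isPrime
    FRationalPairAt (Localization.AtPrime m) p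
      (a.map (algebraMap R (Localization.AtPrime m))) t

/-- Excellence of a ring.  The full definition (a Noetherian, universally catenary
quasi-excellent ring) is not yet available in Mathlib; we record the Noetherian
property. -/
class IsExcellent (R : Type*) [CommRing R] : Prop where
  noetherian : IsNoetherianRing R

/-- A local ring is Cohen-Macaulay if every system of parameters is a regular
sequence. -/
def IsCohenMacaulayLocal (R : Type*) [CommRing R] [IsLocalRing R] : Prop :=
  ∀ (n : ℕ) (x : Fin n → R), IsSOP x → RingTheory.Sequence.IsRegular R (List.ofFn x)

/-- A (compatible family of iterates of a) Frobenius action on an `R`-module `H`,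
such as the natural Frobenius action on local cohomology:  `toFun e` is the
`e`-times iterated Frobenius, which is additive and `p^e`-semilinear. -/
structure FrobeniusActionOn (R : Type*) [CommRing R] (p : ℕ) (H : Type*)
    [AddCommGroup H] [Module R H] where
  toFun : ℕ → H → H
  map_add : ∀ e x y, toFun e (x + y) = toFun e x + toFun e y
  map_smulp : ∀ e (r : R) x, toFun e (r • x) = r ^ p ^ e • toFun e x
  toFun_zero : ∀ x, toFun 0 x = x
  toFun_add : ∀ e e' x, toFun (e + e') x = toFun e (toFun e' x)

/-- The top local cohomology module `H^i_𝔪(R)` (via Mathlib's `localCohomology`). -/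
def LC (R : Type) [CommRing R] [IsLocalRing R] (i : ℕ) : Type :=
  (localCohomology (maximalIdeal R) i).obj (ModuleCat.of R R)

instance (R : Type) [CommRing R] [IsLocalRing R] (i : ℕ) : AddCommGroup (LC R i) := by
  unfold LC; infer_instance

instance (R : Type) [CommRing R] [IsLocalRing R] (i : ℕ) : Module R (LC R i) := by
  unfold LC; infer_instance

/-- The `𝔞^t`-tight closure of `0` in a module `H` with Frobenius action `F`. -/
def zeroTC {R : Type*} [CommRing R] (p : ℕ) {H : Type*} [AddCommGroup H] [Module R H]
    (F : FrobeniusActionOn R p H) (a : Ideal R) (t : ℝ) : Set H :=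
  {ξ | ∃ c ∈ Rcirc R, ∃ e₀ : ℕ, ∀ e ≥ e₀, ∀ y ∈ a ^ ⌈t * (p : ℝ) ^ e⌉₊,
    (c * y) • F.toFun e ξ = 0}


theorem natCast_mul_floor_le_floor_mul_sub_one {n : ℕ} (hn : 1 ≤ n) {t q : ℝ} (ht : 0 ≤ t)
    (hq : 1 ≤ q) : n * ⌊t * (q - 1)⌋₊ ≤ ⌊t * (q * n - 1)⌋₊ := by
  have hn' : (1 : ℝ) ≤ n := by exact_mod_cast hn
  apply Nat.le_floor
  calc ((n * ⌊t * (q - 1)⌋₊ : ℕ) : ℝ) = n * ⌊t * (q - 1)⌋₊ := Nat.cast_mul _ _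
    _ ≤ n * (t * (q - 1)) := by gcongr; exact Nat.floor_le (by nlinarith)
    _ ≤ t * (q * n - 1) := by nlinarith

namespace FrobeniusActionOn

variable {R : Type*} [CommRing R] {p : ℕ} {H : Type*} [AddCommGroup H] [Module R H]
  (F : FrobeniusActionOn R p H)

theorem map_zero (e : ℕ) : F.toFun e 0 = 0 := by
  simpa using F.map_add e 0 0

theorem pow_smul_toFun_add_eq_zero {f : R} {m n e b : ℕ} {x : H}
    (hx : f ^ m • F.toFun e x = 0) (hmn : p ^ b * m ≤ n) :
    f ^ n • F.toFun (e + b) x = 0 := by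
  have hFx : f ^ (p ^ b * m) • F.toFun b (F.toFun e x) = 0 := by
    rw [mul_comm, pow_mul, ← F.map_smulp, hx, F.map_zero]
  rw [add_comm, F.toFun_add, ← Nat.sub_add_cancel hmn, pow_add, mul_smul, hFx, smul_zero]

end FrobeniusActionOn

theorem statement5_general (R : Type) [CommRing R] [IsLocalRing R]
    (p : ℕ) (hp : p.Prime)
    (d : ℕ) (f : R) (t : ℝ) (ht : 0 ≤ t)
    (F : FrobeniusActionOn R p (LC R d)) (z : LC R d) :
    (∀ e' : ℕ, 0 < e' → f ^ ⌊t * ((p : ℝ) ^ e' - 1)⌋₊ • F.toFun e' z = 0 →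
      ∀ b : ℕ, 0 < b →
        f ^ ⌊t * ((p : ℝ) ^ e' * (p : ℝ) ^ b - 1)⌋₊ • F.toFun (e' + b) z = 0) ∧
    ((∀ e₀ : ℕ, ∃ e ≥ e₀, f ^ ⌊t * ((p : ℝ) ^ e - 1)⌋₊ • F.toFun e z ≠ 0) →
      ∀ e : ℕ, f ^ ⌊t * ((p : ℝ) ^ e - 1)⌋₊ • F.toFun e z ≠ 0) := by
  have propagate : ∀ e b : ℕ, f ^ ⌊t * ((p : ℝ) ^ e - 1)⌋₊ • F.toFun e z = 0 →
      f ^ ⌊t * ((p : ℝ) ^ e * (p : ℝ) ^ b - 1)⌋₊ • F.toFun (e + b) z = 0 := by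
    intro e b hz
    refine F.pow_smul_toFun_add_eq_zero hz ?_
    have := natCast_mul_floor_le_floor_mul_sub_one (Nat.one_le_pow b p hp.pos) ht
      (one_le_pow₀ (n := e) (by exact_mod_cast hp.one_lt.le : (1 : ℝ) ≤ p))
    simpa only [Nat.cast_pow] using this
  refine ⟨fun e _ hz b _ => propagate e b hz, fun hinf e hz => ?_⟩
  obtain ⟨e₁, he₁, hne⟩ := hinf e
  apply hne
  simpa [← pow_add, Nat.add_sub_cancel' he₁] using propagate e (e₁ - e) hz

theorem statement5 (R : Type) [CommRing R] [IsLocalRing R] [IsReduced R]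
    (p : ℕ) (hp : p.Prime) [CharP R p]
    (d : ℕ) (hd : ringKrullDim R = (d : WithBot (WithTop ℕ))) (hCM : IsCohenMacaulayLocal R)
    (f : R) (hf : f ∈ Rcirc R) (t : ℝ) (ht : 0 ≤ t)
    (F : FrobeniusActionOn R p (LC R d)) (z : LC R d) :
    (∀ e' : ℕ, 0 < e' → f ^ ⌊t * ((p : ℝ) ^ e' - 1)⌋₊ • F.toFun e' z = 0 →
      ∀ b : ℕ, 0 < b →
        f ^ ⌊t * ((p : ℝ) ^ e' * (p : ℝ) ^ b - 1)⌋₊ • F.toFun (e' + b) z = 0) ∧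
    ((∀ e₀ : ℕ, ∃ e ≥ e₀, f ^ ⌊t * ((p : ℝ) ^ e - 1)⌋₊ • F.toFun e z ≠ 0) →
      ∀ e : ℕ, f ^ ⌊t * ((p : ℝ) ^ e - 1)⌋₊ • F.toFun e z ≠ 0) :=
  statement5_general R p hp d f t ht F z

end RatPairs
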